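/- With L and H_r as in the tRS Lax matrix setting, the top Hamiltonian satisfies H_n = det(L) = ∏_{k=1}^n p_k; in particular det(L) is independent of ζ_1,…,ζ_n. -/

import Mathlib

/-!
The matrix `G(x, w) = (∏_{k ≠ j} (x i - w k))_{ij}` evaluates the polynomials `∏_{k ≠ j} (X - w k)`
at the points `x i`, so `G(x, w) = V(x) C` with `V` the Vandermonde matrix and `C` a coefficient
matrix independent of `x`. Since `G(w, w)` is diagonal, this gives
`det G(x, w) · det V(w) = det V(x) · ∏_j ∏_{k ≠ j} (w j - w k)`.
Now `L = diag(1 / ∏_{k ≠ i} (ζ i - ζ k)) · G(t⁻¹ζ, tζ) · diag(p)`, and for `x = t⁻¹ζ`, `w = tζ` all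
powers of `t` cancel, so `det G(t⁻¹ζ, tζ) = ∏_i ∏_{k ≠ i} (ζ i - ζ k)` and `det L = ∏ p k`.
The top Hamiltonian has the single term `I = univ`, which is `∏ p k`.
-/

open Finset

noncomputable def tRSLax {K : Type*} [Field K] (n : ℕ) (ζ p : Fin n → K) (t : K) :
    Matrix (Fin n) (Fin n) K :=
  Matrix.of fun i j =>
    ((∏ k ∈ univ.erase j, (t⁻¹ * ζ i - t * ζ k)) /
      (∏ k ∈ univ.erase i, (ζ i - ζ k))) * p j

noncomputable def tRSHam {K : Type*} [Field K] (n : ℕ) (ζ p : Fin n → K) (t : K) (r : ℕ) : K :=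
  ∑ I ∈ powersetCard r (univ : Finset (Fin n)),
    (∏ i ∈ I, ∏ j ∈ Iᶜ, ((t⁻¹ * ζ i - t * ζ j) / (ζ i - ζ j))) * ∏ k ∈ I, p k

open Polynomial

namespace Matrix

variable {R : Type*} [CommRing R] {n : ℕ}

theorem eval_matrix_eq_vandermonde_mul_coeff (v : Fin n → R) (P : Fin n → R[X])
    (hP : ∀ j, (P j).natDegree < n) :
    of (fun i j => (P j).eval (v i)) =
      vandermonde v * of (fun (i j : Fin n) => (P j).coeff i) := by
  ext i j
  rw [of_apply, eval_eq_sum_range' (hP j), ← Fin.sum_univ_eq_sum_range]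
  simp only [mul_apply, vandermonde_apply, of_apply, mul_comm]

theorem det_prod_erase_sub_mul_det_vandermonde (x w : Fin n → R) :
    det (of fun i j => ∏ k ∈ univ.erase j, (x i - w k)) * det (vandermonde w) =
      det (vandermonde x) * ∏ j, ∏ k ∈ univ.erase j, (w j - w k) := by
  set P : Fin n → R[X] := fun j => ∏ k ∈ univ.erase j, (X - C (w k))
  have hP : ∀ j, (P j).natDegree < n := fun j => by
    calc (P j).natDegree ≤ ∑ k ∈ univ.erase j, (X - C (w k)).natDegree := natDegree_prod_le _ _
      _ ≤ ∑ _k ∈ univ.erase j, 1 := by gcongr; exact natDegree_X_sub_C_le _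
      _ = n - 1 := by simp
      _ < n := Nat.sub_lt j.pos one_pos
  have hfactor : ∀ v : Fin n → R, of (fun i j => ∏ k ∈ univ.erase j, (v i - w k)) =
      vandermonde v * of (fun (i j : Fin n) => (P j).coeff i) := fun v => by
    rw [← eval_matrix_eq_vandermonde_mul_coeff v P hP]
    simp [P, eval_prod]
  have hdiag : of (fun i j => ∏ k ∈ univ.erase j, (w i - w k)) =
      diagonal fun j => ∏ k ∈ univ.erase j, (w j - w k) := by
    ext i j
    rcases eq_or_ne i j with rfl | hij
    · simp
    · rw [diagonal_apply_ne _ hij, of_apply]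
      exact prod_eq_zero (mem_erase.mpr ⟨hij, mem_univ i⟩) (sub_self _)
  rw [hfactor x, det_mul, mul_assoc, mul_comm _ (det (vandermonde w)), ← det_mul,
    ← hfactor w, hdiag, det_diagonal]

theorem det_vandermonde_smul (c : R) (v : Fin n → R) :
    det (vandermonde (c • v)) = c ^ (∑ i : Fin n, (i : ℕ)) * det (vandermonde v) := by
  have : vandermonde (c • v) = of fun i (j : Fin n) => c ^ (j : ℕ) * vandermonde v i j := by
    ext i j
    simp [vandermonde_apply, mul_pow]
  rw [this, det_mul_row, prod_pow_eq_pow_sum]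

end Matrix

theorem Fin.sum_val_mul_two (n : ℕ) : (∑ i : Fin n, (i : ℕ)) * 2 = n * (n - 1) := by
  rw [Fin.sum_univ_eq_sum_range (fun i => i) n, sum_range_id_mul_two]

theorem Finset.prod_prod_erase_mul {ι M : Type*} [Fintype ι] [DecidableEq ι] [CommMonoid M]
    (c : M) (a : ι → ι → M) :
    ∏ j, ∏ k ∈ univ.erase j, (c * a j k) =
      c ^ (Fintype.card ι * (Fintype.card ι - 1)) * ∏ j, ∏ k ∈ univ.erase j, a j k := by
  simp only [prod_mul_distrib, prod_const, card_erase_of_mem (mem_univ _), card_univ]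
  rw [← pow_mul, mul_comm (Fintype.card ι - 1)]

section LaxMatrix

variable {K : Type*} [Field K] {n : ℕ}

open Matrix

theorem det_prod_erase_inv_mul_sub_mul {ζ : Fin n → K} (hζ : Function.Injective ζ) {t : K}
    (ht : t ≠ 0) :
    det (of fun i j => ∏ k ∈ univ.erase j, (t⁻¹ * ζ i - t * ζ k)) =
      ∏ i, ∏ k ∈ univ.erase i, (ζ i - ζ k) := by
  have h := det_prod_erase_sub_mul_det_vandermonde (t⁻¹ • ζ) (t • ζ)
  -- `V(t⁻¹ζ)`, `V(tζ)` and the off-diagonal product scale by `t⁻¹ ^ m`, `t ^ m`, `t ^ (2m)`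
  simp only [Pi.smul_apply, smul_eq_mul, ← mul_sub, prod_prod_erase_mul, det_vandermonde_smul,
    Fintype.card_fin, ← Fin.sum_val_mul_two, pow_mul] at h
  have hV : det (vandermonde ζ) ≠ 0 := det_vandermonde_ne_zero_iff.mpr hζ
  have htm : t ^ (∑ i : Fin n, (i : ℕ)) ≠ 0 := pow_ne_zero _ ht
  apply mul_right_cancel₀ (mul_ne_zero htm hV)
  rw [h, inv_pow]
  field_simp

theorem tRSLax_eq_diagonal_mul_mul_diagonal (ζ p : Fin n → K) (t : K) :
    tRSLax n ζ p t = diagonal (fun i => (∏ k ∈ univ.erase i, (ζ i - ζ k))⁻¹) *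
      of (fun i j => ∏ k ∈ univ.erase j, (t⁻¹ * ζ i - t * ζ k)) * diagonal p := by
  ext i j
  simp only [tRSLax, of_apply, diagonal_mul, mul_diagonal, div_eq_inv_mul]

theorem det_tRSLax {ζ : Fin n → K} (hζ : Function.Injective ζ) (p : Fin n → K) {t : K}
    (ht : t ≠ 0) : (tRSLax n ζ p t).det = ∏ k, p k := by
  have hd : ∏ i, ∏ k ∈ univ.erase i, (ζ i - ζ k) ≠ 0 :=
    prod_ne_zero_iff.mpr fun i _ => prod_ne_zero_iff.mpr fun k hk =>
      sub_ne_zero.mpr (hζ.ne (mem_erase.mp hk).1.symm)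
  rw [tRSLax_eq_diagonal_mul_mul_diagonal, det_mul, det_mul, det_diagonal, det_diagonal,
    det_prod_erase_inv_mul_sub_mul hζ ht, prod_inv_distrib, inv_mul_cancel₀ hd, one_mul]

theorem tRSHam_self (ζ p : Fin n → K) (t : K) : tRSHam n ζ p t n = ∏ k, p k := by
  have : powersetCard n (univ : Finset (Fin n)) = {univ} := by
    simpa using powersetCard_self (univ : Finset (Fin n))
  simp [tRSHam, this]

end LaxMatrix

theorem stmt5_general {K : Type*} [Field K] (n : ℕ) (ζ p : Fin n → K) (t : K)
    (hζ : Function.Injective ζ) (ht : t ≠ 0) :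
    tRSHam n ζ p t n = (tRSLax n ζ p t).det
  ∧ (tRSLax n ζ p t).det = ∏ k, p k := by
  rw [det_tRSLax hζ p ht]
  exact ⟨tRSHam_self ζ p t, rfl⟩

/-- The top Hamiltonian: H_n = det(L) = ∏ p_k (so det L is independent of ζ). -/
theorem stmt5 {K : Type*} [Field K] (n : ℕ) (ζ p : Fin n → K) (t : K)
    (hζ : Function.Injective ζ) (hζ0 : ∀ i, ζ i ≠ 0) (ht : t ≠ 0) :
    tRSHam n ζ p t n = (tRSLax n ζ p t).det
  ∧ (tRSLax n ζ p t).det = ∏ k, p k :=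
  stmt5_general n ζ p t hζ ht
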